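/- Let λ > 0 and C, D > 0 with √C + √D < √λ, and set N = {(v,w) ∈ ℝ³ × ℝ³ : ⟨v,w⟩ = 0, (1-|v|²)√(λ+|w|²) = √C + √D}. Then every (v,w) ∈ N satisfies |v|² ≥ 1 - (√C+√D)/√λ > 0, and the map (v,w) ↦ (v/|v|, w) is a homeomorphism from N onto TS² = {(v',w') ∈ S² × ℝ³ : ⟨v',w'⟩ = 0}. -/

import Mathlib

open scoped RealInnerProductSpace
open Real

/-- `N = {(v,w) ∈ ℝ³ × ℝ³ : ⟨v,w⟩ = 0, (1-|v|²)√(λ+|w|²) = √C + √D}`. -/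
def NSet (lam C D : ℝ) : Set (EuclideanSpace ℝ (Fin 3) × EuclideanSpace ℝ (Fin 3)) :=
  {p | ⟪p.1, p.2⟫ = 0 ∧ (1 - ‖p.1‖ ^ 2) * Real.sqrt (lam + ‖p.2‖ ^ 2) =
    Real.sqrt C + Real.sqrt D}

/-- `TS² = {(v,w) ∈ S² × ℝ³ : ⟨v,w⟩ = 0}`. -/
def TS2 : Set (EuclideanSpace ℝ (Fin 3) × EuclideanSpace ℝ (Fin 3)) :=
  {p | ‖p.1‖ = 1 ∧ ⟪p.1, p.2⟫ = 0}

noncomputable def rfun (lam s t : ℝ) : ℝ := Real.sqrt (1 - s / Real.sqrt (lam + t ^ 2))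

lemma sqrt_lam_t_pos (lam t : ℝ) (hlam : 0 < lam) : 0 < Real.sqrt (lam + t ^ 2) :=
  Real.sqrt_pos.mpr (by positivity)

lemma one_sub_div_pos {lam s : ℝ} (t : ℝ) (hlam : 0 < lam) (hs : 0 ≤ s)
    (hsub : s < Real.sqrt lam) : 0 < 1 - s / Real.sqrt (lam + t ^ 2) := by
  have h1 : Real.sqrt lam ≤ Real.sqrt (lam + t ^ 2) :=
    Real.sqrt_le_sqrt (by nlinarith [sq_nonneg t])
  have h2 := sqrt_lam_t_pos lam t hlam
  rw [sub_pos, div_lt_one h2]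
  exact lt_of_lt_of_le hsub h1

lemma rfun_sq {lam s : ℝ} (t : ℝ) (hlam : 0 < lam) (hs : 0 ≤ s)
    (hsub : s < Real.sqrt lam) :
    rfun lam s t ^ 2 = 1 - s / Real.sqrt (lam + t ^ 2) :=
  Real.sq_sqrt (one_sub_div_pos t hlam hs hsub).le

lemma rfun_pos {lam s : ℝ} (t : ℝ) (hlam : 0 < lam) (hs : 0 ≤ s)
    (hsub : s < Real.sqrt lam) : 0 < rfun lam s t :=
  Real.sqrt_pos.mpr (one_sub_div_pos t hlam hs hsub)

lemma continuous_rfun {lam s : ℝ} (hlam : 0 < lam) :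
    Continuous (fun t => rfun lam s t) := by
  apply Real.continuous_sqrt.comp
  apply continuous_const.sub
  apply continuous_const.div
  · exact Real.continuous_sqrt.comp (continuous_const.add (continuous_pow 2))
  · intro t; exact (sqrt_lam_t_pos lam t hlam).ne'

/-- norm of first coordinate equals `rfun` of norm of second, on `N`. -/
lemma norm_eq_rfun {lam C D : ℝ} (hlam : 0 < lam)
    (hs : 0 ≤ Real.sqrt C + Real.sqrt D)
    (hsub : Real.sqrt C + Real.sqrt D < Real.sqrt lam)
    {p : EuclideanSpace ℝ (Fin 3) × EuclideanSpace ℝ (Fin 3)}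
    (hp : p ∈ NSet lam C D) :
    ‖p.1‖ = rfun lam (Real.sqrt C + Real.sqrt D) ‖p.2‖ := by
  obtain ⟨-, h2⟩ := hp
  have hpos := sqrt_lam_t_pos lam ‖p.2‖ hlam
  have hv : ‖p.1‖ ^ 2 = 1 - (Real.sqrt C + Real.sqrt D) / Real.sqrt (lam + ‖p.2‖ ^ 2) := by
    field_simp
    nlinarith [h2]
  rw [← Real.sqrt_sq (norm_nonneg p.1), hv]
  rfl

/-- For `√C + √D < √λ`: every `(v,w) ∈ N` has `|v|² ≥ 1 - (√C+√D)/√λ > 0`, and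
`(v,w) ↦ (v/|v|, w)` is a homeomorphism from `N` onto `TS²`. -/
theorem NSet_homeo_TS2_subcritical (lam C D : ℝ) (hlam : 0 < lam) (hC : 0 < C) (hD : 0 < D)
    (hsub : Real.sqrt C + Real.sqrt D < Real.sqrt lam) :
    (0 : ℝ) < 1 - (Real.sqrt C + Real.sqrt D) / Real.sqrt lam ∧
    (∀ p ∈ NSet lam C D,
      1 - (Real.sqrt C + Real.sqrt D) / Real.sqrt lam ≤ ‖p.1‖ ^ 2) ∧
    ∃ h : NSet lam C D ≃ₜ TS2,
      ∀ p : NSet lam C D,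
        (h p : EuclideanSpace ℝ (Fin 3) × EuclideanSpace ℝ (Fin 3)) =
          (‖p.val.1‖⁻¹ • p.val.1, p.val.2) := by
  set s := Real.sqrt C + Real.sqrt D with hsdef
  have hL : 0 < Real.sqrt lam := Real.sqrt_pos.mpr hlam
  have hs0 : 0 ≤ s := by positivity
  have h1 : (0 : ℝ) < 1 - s / Real.sqrt lam := by
    rw [sub_pos, div_lt_one hL]; exact hsub
  have hbound : ∀ p ∈ NSet lam C D, 1 - s / Real.sqrt lam ≤ ‖p.1‖ ^ 2 := by
    intro p hp
    have hv := norm_eq_rfun hlam hs0 hsub hp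
    have hsq : ‖p.1‖ ^ 2 = 1 - s / Real.sqrt (lam + ‖p.2‖ ^ 2) := by
      rw [hv]; exact rfun_sq _ hlam hs0 hsub
    rw [hsq]
    have hle : Real.sqrt lam ≤ Real.sqrt (lam + ‖p.2‖ ^ 2) :=
      Real.sqrt_le_sqrt (by nlinarith [sq_nonneg ‖p.2‖])
    have hdiv : s / Real.sqrt (lam + ‖p.2‖ ^ 2) ≤ s / Real.sqrt lam :=
      div_le_div_of_nonneg_left hs0 hL hle |>.trans_eq rfl
    linarith
  refine ⟨h1, hbound, ?_⟩
  have hnorm_pos : ∀ p ∈ NSet lam C D, (0:ℝ) < ‖p.1‖ := by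
    intro p hp
    rw [norm_eq_rfun hlam hs0 hsub hp]
    exact rfun_pos _ hlam hs0 hsub
  have fwd_mem : ∀ p : NSet lam C D,
      ((‖p.val.1‖⁻¹ • p.val.1, p.val.2) :
        EuclideanSpace ℝ (Fin 3) × EuclideanSpace ℝ (Fin 3)) ∈ TS2 := by
    intro ⟨p, hp⟩
    have hpos := hnorm_pos p hp
    constructor
    · simp [norm_smul, abs_of_pos (inv_pos.mpr hpos), inv_mul_cancel₀ hpos.ne']
    · simp only [real_inner_smul_left, hp.1, mul_zero]
  have bwd_mem : ∀ q : TS2,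
      ((rfun lam s ‖q.val.2‖ • q.val.1, q.val.2) :
        EuclideanSpace ℝ (Fin 3) × EuclideanSpace ℝ (Fin 3)) ∈ NSet lam C D := by
    intro ⟨q, hq⟩
    have hr := rfun_pos ‖q.2‖ hlam hs0 hsub
    have hrsq := rfun_sq ‖q.2‖ hlam hs0 hsub (s := s)
    have hpos := sqrt_lam_t_pos lam ‖q.2‖ hlam
    constructor
    · simp only [real_inner_smul_left, hq.2, mul_zero]
    · have hnn : ‖rfun lam s ‖q.2‖ • q.1‖ ^ 2 = rfun lam s ‖q.2‖ ^ 2 := by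
        rw [norm_smul, mul_pow, hq.1, one_pow, mul_one, Real.norm_eq_abs, sq_abs]
      rw [hnn, hrsq]
      field_simp
      linarith
  refine ⟨⟨⟨fun p => ⟨_, fwd_mem p⟩, fun q => ⟨_, bwd_mem q⟩, ?_, ?_⟩, ?_, ?_⟩, fun p => rfl⟩
  · rintro ⟨p, hp⟩
    have hpos := hnorm_pos p hp
    have hrv : rfun lam s ‖p.2‖ = ‖p.1‖ := (norm_eq_rfun hlam hs0 hsub hp).symm
    apply Subtype.ext
    simp only [hrv, smul_smul, mul_inv_cancel₀ hpos.ne', one_smul]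
  · rintro ⟨q, hq⟩
    have hr := rfun_pos ‖q.2‖ hlam hs0 hsub (s := s)
    apply Subtype.ext
    have hn : ‖rfun lam s ‖q.2‖ • q.1‖ = rfun lam s ‖q.2‖ := by
      rw [norm_smul, hq.1, mul_one, Real.norm_eq_abs, abs_of_pos hr]
    simp only [hn, smul_smul, inv_mul_cancel₀ hr.ne', one_smul]
  · apply Continuous.subtype_mk
    refine Continuous.prodMk (Continuous.fun_smul ?_ ?_) ?_
    · refine Continuous.inv₀ (continuous_norm.comp (continuous_fst.comp continuous_subtype_val)) ?_
      intro ⟨p, hp⟩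
      exact (hnorm_pos p hp).ne'
    · exact continuous_fst.comp continuous_subtype_val
    · exact continuous_snd.comp continuous_subtype_val
  · apply Continuous.subtype_mk
    refine Continuous.prodMk (Continuous.fun_smul ?_ ?_) ?_
    · exact (continuous_rfun hlam).comp
        (continuous_norm.comp (continuous_snd.comp continuous_subtype_val))
    · exact continuous_fst.comp continuous_subtype_val
    · exact continuous_snd.comp continuous_subtype_val
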